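/- arXiv:2405.08097 — 4 statements merged into one kernel-verified Lean document; each statement's English description precedes it below -/
import Mathlib

section
/- Let Γ be a group acting on a topological measure space X, and G ≤ Γ a finite-index subgroup. Suppose f_1,...,f_r : X → ℝ are Γ-invariant functions that generically separate Γ-orbits (i.e., there is a closed, measure-zero, Γ-invariant subset B' ⊆ X such that any two points outside B' lying in distinct Γ-orbits are separated by some f_i). Suppose f*_1,...,f*_s : X → ℝ are G-invariant functions such that: (a) every element γ ∈ Γ fixing all f*_j lies in G, and (b) for every j and every γ ∈ Γ with γf*_j ≠ f*_j, the zero set of γf*_j − f*_j is closed and has measure zero. Then there exists a closed, measure-zero, G-invariant subset B'' ⊆ X such that any two points of X outside B'' lying in distinct G-orbits are separated by some function among f_1,...,f_r,f*_1,...,f*_s. -/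
/-!
Outside the generic bad set `B'` of the `fᵢ`, two points `x, y` with the same values of all `fᵢ`
satisfy `y = γ • x` for some `γ ∈ Γ`. If moreover `f*ⱼ x = f*ⱼ y`, then `y` lies in the zero set of
`γ f*ⱼ - f*ⱼ`; removing these zero sets for every `j` and every `γ` with `γ f*ⱼ ≠ f*ⱼ` therefore
forces `γ f*ⱼ = f*ⱼ` for all `j`, i.e. `γ ∈ G`. Since `f*ⱼ` is `G`-invariant, `γ f*ⱼ` depends only on
the coset `γG`, so only finitely many zero sets are removed and the bad set stays closed and null.
-/

open MeasureTheory MulAction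

namespace MulAction

variable {Γ X β : Type*} [Group Γ] [MulAction Γ X]

/-- The union of the zero sets of `γ • φ - φ` over the `γ` with `γ • φ ≠ φ`, where
`(γ • φ) x = φ (γ⁻¹ • x)`. -/
def translateEqLocus (φ : X → β) : Set X :=
  ⋃ (γ : Γ) (_ : ∃ y, φ (γ⁻¹ • y) ≠ φ y), {x | φ (γ⁻¹ • x) = φ x}

variable {G : Subgroup Γ} {φ : X → β}

theorem comp_inv_smul_eq_of_mk_eq (hφ : ∀ g ∈ G, ∀ x, φ (g • x) = φ x) {γ₁ γ₂ : Γ}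
    (h : (γ₁ : Γ ⧸ G) = γ₂) : (fun x => φ (γ₁⁻¹ • x)) = fun x => φ (γ₂⁻¹ • x) := by
  have hmem : γ₂⁻¹ * γ₁ ∈ G := QuotientGroup.eq.mp h.symm
  funext x
  rw [← hφ _ hmem, smul_smul, mul_inv_cancel_right]

theorem translateEqLocus_eq_iUnion_quotient (G : Subgroup Γ) (hφ : ∀ g ∈ G, ∀ x, φ (g • x) = φ x) :
    translateEqLocus (Γ := Γ) φ = ⋃ (c : Γ ⧸ G) (_ : ∃ y, φ (c.out⁻¹ • y) ≠ φ y),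
      {x | φ (c.out⁻¹ • x) = φ x} := by
  let U : (X → β) → Set X := fun ψ => ⋃ (_ : ∃ y, ψ y ≠ φ y), {x | ψ x = φ x}
  have hU : ∀ γ : Γ, U (fun x => φ (γ⁻¹ • x)) = U (fun x => φ ((γ : Γ ⧸ G).out⁻¹ • x)) :=
    fun γ => congrArg U (comp_inv_smul_eq_of_mk_eq hφ (QuotientGroup.out_eq' _).symm)
  calc translateEqLocus φ = ⋃ γ : Γ, U (fun x => φ ((γ : Γ ⧸ G).out⁻¹ • x)) := Set.iUnion_congr hU
    _ = _ := QuotientGroup.mk_surjective.iUnion_comp fun c : Γ ⧸ G => U (fun x => φ (c.out⁻¹ • x))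

theorem smul_mem_translateEqLocus (hφ : ∀ g ∈ G, ∀ x, φ (g • x) = φ x) {g : Γ} (hg : g ∈ G)
    {x : X} (hx : x ∈ translateEqLocus (Γ := Γ) φ) : g • x ∈ translateEqLocus (Γ := Γ) φ := by
  obtain ⟨γ, ⟨y, hy⟩, hγx⟩ := Set.mem_iUnion₂.mp hx
  -- `g • x` lies in the locus of the conjugate `g γ g⁻¹`, since `φ` absorbs `g`
  have hconj : ∀ z, φ ((g * γ * g⁻¹)⁻¹ • g • z) = φ (g • γ⁻¹ • z) := fun z => by
    rw [smul_smul, smul_smul]; congr 2; group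
  refine Set.mem_iUnion₂.mpr ⟨g * γ * g⁻¹, ⟨g • y, ?_⟩, ?_⟩
  · rwa [hconj, hφ g hg, hφ g hg]
  · simp only [Set.mem_ofPred_eq, hconj, hφ g hg]
    exact hγx

theorem translate_eq_of_notMem_translateEqLocus {y : X} (hy : y ∉ translateEqLocus (Γ := Γ) φ)
    {γ : Γ} (hγy : φ (γ⁻¹ • y) = φ y) (x : X) : φ (γ⁻¹ • x) = φ x := by
  by_contra hx
  exact hy (Set.mem_iUnion₂.mpr ⟨γ, ⟨x, hx⟩, hγy⟩)

variable [G.FiniteIndex]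

theorem isClosed_translateEqLocus [TopologicalSpace X] (hφ : ∀ g ∈ G, ∀ x, φ (g • x) = φ x)
    (hclosed : ∀ γ : Γ, (∃ y, φ (γ⁻¹ • y) ≠ φ y) → IsClosed {x | φ (γ⁻¹ • x) = φ x}) :
    IsClosed (translateEqLocus (Γ := Γ) φ) := by
  rw [translateEqLocus_eq_iUnion_quotient G hφ]
  exact isClosed_iUnion_of_finite fun c => isClosed_iUnion_of_finite (hclosed c.out)

theorem measure_translateEqLocus [MeasurableSpace X] (μ : Measure X)
    (hφ : ∀ g ∈ G, ∀ x, φ (g • x) = φ x)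
    (hnull : ∀ γ : Γ, (∃ y, φ (γ⁻¹ • y) ≠ φ y) → μ {x | φ (γ⁻¹ • x) = φ x} = 0) :
    μ (translateEqLocus (Γ := Γ) φ) = 0 := by
  rw [translateEqLocus_eq_iUnion_quotient G hφ]
  exact measure_iUnion_null fun c => measure_iUnion_null (hnull c.out)

end MulAction

theorem stmt1_general {Γ : Type*} [Group Γ] {X : Type*} [MulAction Γ X]
    [TopologicalSpace X] [MeasurableSpace X] (μ : Measure X)
    (G : Subgroup Γ) [G.FiniteIndex]
    (r s : ℕ) (f : Fin r → X → ℝ) (fstar : Fin s → X → ℝ)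
    (hgen : ∃ B' : Set X, IsClosed B' ∧ μ B' = 0 ∧
      (∀ (γ : Γ) x, x ∈ B' → γ • x ∈ B') ∧
      (∀ x ∉ B', ∀ y ∉ B', (∀ i, f i x = f i y) → ∃ γ : Γ, γ • x = y))
    (hfsG : ∀ j, ∀ g ∈ G, ∀ x, fstar j (g • x) = fstar j x)
    (ha : ∀ γ : Γ, (∀ j x, fstar j (γ⁻¹ • x) = fstar j x) → γ ∈ G)
    (hb : ∀ j (γ : Γ), (∃ x, fstar j (γ⁻¹ • x) ≠ fstar j x) →
      IsClosed {x | fstar j (γ⁻¹ • x) = fstar j x} ∧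
      μ {x | fstar j (γ⁻¹ • x) = fstar j x} = 0) :
    ∃ B'' : Set X, IsClosed B'' ∧ μ B'' = 0 ∧
      (∀ g ∈ G, ∀ x ∈ B'', g • x ∈ B'') ∧
      (∀ x ∉ B'', ∀ y ∉ B'',
        (∀ i, f i x = f i y) → (∀ j, fstar j x = fstar j y) →
        ∃ g ∈ G, g • x = y) := by
  obtain ⟨B', hB'closed, hB'null, hB'inv, hB'sep⟩ := hgen
  refine ⟨B' ∪ ⋃ j, translateEqLocus (Γ := Γ) (fstar j), ?_, ?_, ?_, ?_⟩
  · exact hB'closed.union <| isClosed_iUnion_of_finite fun j =>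
      isClosed_translateEqLocus (hfsG j) fun γ h => (hb j γ h).1
  · exact measure_union_null hB'null <| measure_iUnion_null fun j =>
      measure_translateEqLocus μ (hfsG j) fun γ h => (hb j γ h).2
  · rintro g hg x (hx | hx)
    · exact Or.inl (hB'inv g x hx)
    · obtain ⟨j, hj⟩ := Set.mem_iUnion.mp hx
      exact Or.inr (Set.mem_iUnion.mpr ⟨j, smul_mem_translateEqLocus (hfsG j) hg hj⟩)
  · intro x hx y hy hf hfs
    simp only [Set.mem_union, Set.mem_iUnion, not_or, not_exists] at hx hy
    obtain ⟨γ, rfl⟩ := hB'sep x hx.1 y hy.1 hf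
    refine ⟨γ, ha γ fun j => translate_eq_of_notMem_translateEqLocus (hy.2 j) ?_, rfl⟩
    rw [inv_smul_smul]
    exact hfs j

/-- the "Galois theorem for machine learning". -/
theorem stmt1 {Γ : Type*} [Group Γ] {X : Type*} [MulAction Γ X]
    [TopologicalSpace X] [MeasurableSpace X] (μ : Measure X)
    (G : Subgroup Γ) [G.FiniteIndex]
    (r s : ℕ) (f : Fin r → X → ℝ) (fstar : Fin s → X → ℝ)
    (hfΓ : ∀ i (γ : Γ) x, f i (γ • x) = f i x)
    (hgen : ∃ B' : Set X, IsClosed B' ∧ μ B' = 0 ∧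
      (∀ (γ : Γ) x, x ∈ B' → γ • x ∈ B') ∧
      (∀ x ∉ B', ∀ y ∉ B', (∀ i, f i x = f i y) → ∃ γ : Γ, γ • x = y))
    (hfsG : ∀ j, ∀ g ∈ G, ∀ x, fstar j (g • x) = fstar j x)
    (ha : ∀ γ : Γ, (∀ j x, fstar j (γ⁻¹ • x) = fstar j x) → γ ∈ G)
    (hb : ∀ j (γ : Γ), (∃ x, fstar j (γ⁻¹ • x) ≠ fstar j x) →
      IsClosed {x | fstar j (γ⁻¹ • x) = fstar j x} ∧
      μ {x | fstar j (γ⁻¹ • x) = fstar j x} = 0) :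
    ∃ B'' : Set X, IsClosed B'' ∧ μ B'' = 0 ∧
      (∀ g ∈ G, ∀ x ∈ B'', g • x ∈ B'') ∧
      (∀ x ∉ B'', ∀ y ∉ B'',
        (∀ i, f i x = f i y) → (∀ j, fstar j x = fstar j y) →
        ∃ g ∈ G, g • x = y) :=
  stmt1_general μ G r s f fstar hgen hfsG ha hb
end

section
/- Let n ≥ 3. Consider the polynomial f*(X) = Σ_{i ≠ j} X_{ii} X_{ij} in the variables X_{ii} (1 ≤ i ≤ n) and X_{ij} = X_{ji} (1 ≤ i < j ≤ n). Let Γ = S_n × S_{n(n−1)/2} act on these variables by permuting the diagonal variables X_{ii} via the first factor and the off-diagonal variables X_{ij} (i<j) via the second factor. Then an element (σ,τ) ∈ Γ fixes f* if and only if σ and τ are induced by a common permutation π of {1,...,n}, i.e., σ sends X_{ii} to X_{π(i)π(i)} and τ sends X_{ij} to X_{π(i)π(j)}. -/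
open MvPolynomial

/-- The polynomial `f⋆ = ∑_{i ≠ j} X_{ii} X_{ij}` in variables indexed by
`Sym2 (Fin n)` (so that `X_{ij} = X_{ji}` automatically). -/
noncomputable def fstarPoly (n : ℕ) : MvPolynomial (Sym2 (Fin n)) ℝ :=
  ∑ p ∈ Finset.univ.offDiag,
    X (Sym2.mk p.1 p.1) * X (Sym2.mk p.1 p.2)

/-! A variable permutation fixes `f⋆` exactly when it preserves its support, the monomials
`X_{ii} X_{ij}` with `i ≠ j`: the incidences between a vertex `i` and an edge `{i, j}` of the
complete graph. If `ρ` sends `X_{ii}` to `X_{σ(i)σ(i)}`, incidence preservation puts both `σ(i)`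
and `σ(j)` into the edge `ρ {i, j}`, which is therefore `{σ(i), σ(j)}`. -/

theorem MvPolynomial.mapDomain_mem_support_of_rename_eq {σ R : Type*} [CommSemiring R]
    {f : σ → σ} (hf : f.Injective) {p : MvPolynomial σ R} (h : rename f p = p)
    {m : σ →₀ ℕ} (hm : m ∈ p.support) : m.mapDomain f ∈ p.support := by
  rw [mem_support_iff, ← h, coeff_rename_mapDomain f hf]
  exact mem_support_iff.mp hm

section FstarPoly

open Finsupp Sym2

variable {n : ℕ}

theorem fstarPoly_eq_sum_monomial :
    fstarPoly n = ∑ p ∈ Finset.univ.offDiag,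
      monomial (single s(p.1, p.1) 1 + single s(p.1, p.2) 1) (1 : ℝ) := by
  simp only [fstarPoly, X, monomial_mul, one_mul]

theorem mem_support_fstarPoly_iff {m : Sym2 (Fin n) →₀ ℕ} :
    m ∈ (fstarPoly n).support ↔ ∃ i j, i ≠ j ∧ single s(i, i) 1 + single s(i, j) 1 = m := by
  classical
  simp [MvPolynomial.mem_support_iff, fstarPoly_eq_sum_monomial, coeff_sum, coeff_monomial,
    Finset.sum_boole, Finset.filter_eq_empty_iff]

theorem single_diag_add_single_mem_support_fstarPoly_iff {a : Fin n} {e : Sym2 (Fin n)}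
    (he : ¬ e.IsDiag) :
    single (diag a) 1 + single e 1 ∈ (fstarPoly n).support ↔ a ∈ e := by
  rw [mem_support_fstarPoly_iff]
  constructor
  · rintro ⟨i, j, -, hij⟩
    rcases (single_add_single_eq_single_add_single one_ne_zero one_ne_zero).mp hij with
      ⟨hi, rfl⟩ | ⟨-, rfl, -⟩ | ⟨h2, -⟩
    · rw [← diag_injective hi]; exact mem_mk_left i j
    · exact (he rfl).elim
    · exact absurd h2 two_ne_zero
  · intro ha
    obtain ⟨b, rfl⟩ := mem_iff_exists.mp ha
    exact ⟨a, b, fun hab => he (mk_isDiag_iff.mpr hab), rfl⟩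

theorem rename_map_fstarPoly (π : Equiv.Perm (Fin n)) :
    rename (Sym2.map π) (fstarPoly n) = fstarPoly n := by
  simp only [fstarPoly, map_sum, map_mul, rename_X, map_mk]
  refine Finset.sum_equiv (π.prodCongr π) (fun p => ?_) (fun _ _ => rfl)
  simp [Finset.mem_offDiag, π.injective.ne_iff]

theorem mem_apply_of_rename_fstarPoly_eq {ρ : Equiv.Perm (Sym2 (Fin n))}
    (h : rename ρ (fstarPoly n) = fstarPoly n) {i j a : Fin n} (hij : i ≠ j)
    (hoff : ¬ (ρ s(i, j)).IsDiag) (ha : ρ (diag i) = diag a) : a ∈ ρ s(i, j) := by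
  have hmem : single (diag i) 1 + single s(i, j) 1 ∈ (fstarPoly n).support :=
    (single_diag_add_single_mem_support_fstarPoly_iff (mt mk_isDiag_iff.mp hij)).mpr
      (mem_mk_left i j)
  have := mapDomain_mem_support_of_rename_eq ρ.injective h hmem
  rwa [mapDomain_add, mapDomain_single, mapDomain_single, ha,
    single_diag_add_single_mem_support_fstarPoly_iff hoff] at this

theorem exists_perm_eq_map_of_rename_fstarPoly_eq (ρ : Equiv.Perm (Sym2 (Fin n)))
    (hdiag : ∀ x : Sym2 (Fin n), x.IsDiag → (ρ x).IsDiag)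
    (hoff : ∀ x : Sym2 (Fin n), ¬ x.IsDiag → ¬ (ρ x).IsDiag)
    (h : rename ρ (fstarPoly n) = fstarPoly n) :
    ∃ π : Equiv.Perm (Fin n), ∀ x, ρ x = Sym2.map π x := by
  let σ (i : Fin n) : Fin n := (ρ (diag i)).diagElem (hdiag _ (diag_isDiag i))
  have hσ (i : Fin n) : ρ (diag i) = diag (σ i) := (diag_diagElem _).symm
  have hσinj : σ.Injective := fun i j hij =>
    diag_injective (ρ.injective (by rw [hσ, hσ, hij]))
  have hmem {i j : Fin n} (hij : i ≠ j) : σ i ∈ ρ s(i, j) :=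
    mem_apply_of_rename_fstarPoly_eq h hij (hoff _ (mt mk_isDiag_iff.mp hij)) (hσ i)
  refine ⟨Equiv.ofBijective σ hσinj.bijective_of_finite, Sym2.ind fun i j => ?_⟩
  rcases eq_or_ne i j with rfl | hij
  · exact hσ i
  · exact (mem_and_mem_iff (hσinj.ne hij)).mp ⟨hmem hij, by rw [eq_swap]; exact hmem hij.symm⟩

end FstarPoly

theorem stmt5_general (n : ℕ) (ρ : Equiv.Perm (Sym2 (Fin n)))
    (hdiag : ∀ x : Sym2 (Fin n), x.IsDiag → (ρ x).IsDiag)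
    (hoff : ∀ x : Sym2 (Fin n), ¬ x.IsDiag → ¬ (ρ x).IsDiag) :
    MvPolynomial.rename (⇑ρ) (fstarPoly n) = fstarPoly n ↔
      ∃ π : Equiv.Perm (Fin n), ∀ x : Sym2 (Fin n), ρ x = Sym2.map π x := by
  refine ⟨exists_perm_eq_map_of_rename_fstarPoly_eq ρ hdiag hoff, fun ⟨π, hπ⟩ => ?_⟩
  rw [show ⇑ρ = Sym2.map π from funext hπ]
  exact rename_map_fstarPoly π

/-- a permutation `ρ` of the variables that preserves the split
into diagonal and off-diagonal variables (i.e. an element `(σ,τ)` of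
`S_n × S_{n(n-1)/2}`) fixes `f⋆` iff it is induced by a single permutation `π`
of `{1,…,n}`, meaning `ρ x = Sym2.map π x` for all variables `x`. -/
theorem stmt5 (n : ℕ) (hn : 3 ≤ n) (ρ : Equiv.Perm (Sym2 (Fin n)))
    (hdiag : ∀ x : Sym2 (Fin n), x.IsDiag → (ρ x).IsDiag)
    (hoff : ∀ x : Sym2 (Fin n), ¬ x.IsDiag → ¬ (ρ x).IsDiag) :
    MvPolynomial.rename (⇑ρ) (fstarPoly n) = fstarPoly n ↔
      ∃ π : Equiv.Perm (Fin n), ∀ x : Sym2 (Fin n), ρ x = Sym2.map π x :=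
  stmt5_general n ρ hdiag hoff
end

section
/- Let d ≤ n. A function F : ℝ^{d×n} → ℝ is invariant under the left action of the orthogonal group O(d) (i.e., F(UV) = F(V) for all U ∈ O(d)) and under the right permutation action of S_n on columns if and only if there exists a function G on symmetric n×n positive semidefinite matrices of rank ≤ d, invariant under simultaneous row-and-column permutations, such that F(V) = G(VᵀV) for all V. -/
/-!
Two point clouds `V, W` with the same Gram matrix differ by an orthogonal map: since
`‖V x‖² = xᵀ (VᵀV) x = ‖W x‖²`, the assignment `V x ↦ W x` is a well-defined linear isometry
on the range of `V`, and it extends to an isometry of all of `ℝᵈ`. Hence an `O(d)`-invariant `F`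
factors through `V ↦ VᵀV`, and we take `G` to be the extension of `F` along the Gram map by `0`.
The image of the Gram map is stable under conjugation by permutation matrices, so `G` inherits
the permutation invariance of `F` on the image and is identically `0` off it.
-/

open Matrix
open scoped RealInnerProductSpace

section LinearIsometry

variable {𝕜 E V : Type*} [RCLike 𝕜] [AddCommGroup E] [Module 𝕜 E]
  [NormedAddCommGroup V] [InnerProductSpace 𝕜 V] [FiniteDimensional 𝕜 V]

theorem LinearMap.exists_linearIsometry_comp_eq_of_norm_eq {f g : E →ₗ[𝕜] V}
    (h : ∀ x, ‖f x‖ = ‖g x‖) : ∃ U : V →ₗᵢ[𝕜] V, ∀ x, U (f x) = g x := by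
  have hker : LinearMap.ker f ≤ LinearMap.ker g := fun x hx => by
    rw [LinearMap.mem_ker, ← norm_eq_zero, ← h x, norm_eq_zero]
    exact hx
  let L : LinearMap.range f →ₗ[𝕜] V :=
    (LinearMap.ker f).liftQ g hker ∘ₗ f.quotKerEquivRange.symm.toLinearMap
  have hL : ∀ x, L ⟨f x, LinearMap.mem_range_self f x⟩ = g x := fun x => by
    simp [L, LinearMap.quotKerEquivRange_symm_apply_image]
  have hL_norm : ∀ s, ‖L s‖ = ‖s‖ := by
    rintro ⟨_, x, rfl⟩
    rw [hL, ← h x]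
    rfl
  exact ⟨LinearIsometry.extend ⟨L, hL_norm⟩, fun x =>
    (LinearIsometry.extend_apply _ ⟨f x, _⟩).trans (hL x)⟩

end LinearIsometry

namespace Matrix

theorem transpose_mul_self_of_mem_orthogonalGroup {m n R : Type*} [Fintype m] [DecidableEq m]
    [CommRing R] {U : Matrix m m R} (hU : U ∈ orthogonalGroup m R) (V : Matrix m n R) :
    (U * V)ᵀ * (U * V) = Vᵀ * V := by
  have hUU : Uᵀ * U = 1 := (mem_orthogonalGroup_iff' (A := U)).mp hU
  rw [transpose_mul, Matrix.mul_assoc, ← Matrix.mul_assoc Uᵀ, hUU, Matrix.one_mul]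

variable {m n : Type*} [Fintype m] [Fintype n] [DecidableEq n]

theorem toEuclideanLin_symm_mem_orthogonalGroup [DecidableEq m]
    (U : EuclideanSpace ℝ m →ₗᵢ[ℝ] EuclideanSpace ℝ m) :
    toEuclideanLin.symm U.toLinearMap ∈ orthogonalGroup m ℝ := by
  rw [toEuclideanLin_eq_toLin_orthonormal, toLin_symm]
  exact (U.toLinearIsometryEquiv rfl).toMatrix_mem_unitaryGroup _ _

theorem inner_toEuclideanLin_self (V : Matrix m n ℝ) (x : EuclideanSpace ℝ n) :
    ⟪toEuclideanLin V x, toEuclideanLin V x⟫ = x.ofLp ⬝ᵥ (Vᵀ * V) *ᵥ x.ofLp := by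
  rw [EuclideanSpace.inner_eq_star_dotProduct, star_trivial, toLpLin_apply, WithLp.ofLp_toLp,
    ← mulVec_mulVec, mulVec_transpose, dotProduct_comm x.ofLp, ← dotProduct_mulVec]

theorem exists_mem_orthogonalGroup_mul_eq_of_transpose_mul_self_eq [DecidableEq m]
    {V W : Matrix m n ℝ} (h : Vᵀ * V = Wᵀ * W) : ∃ U ∈ orthogonalGroup m ℝ, U * V = W := by
  obtain ⟨U, hU⟩ := LinearMap.exists_linearIsometry_comp_eq_of_norm_eq
    (f := toEuclideanLin V) (g := toEuclideanLin W) fun x => by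
      rw [norm_eq_sqrt_real_inner, norm_eq_sqrt_real_inner, inner_toEuclideanLin_self,
        inner_toEuclideanLin_self, h]
  refine ⟨_, toEuclideanLin_symm_mem_orthogonalGroup U, toEuclideanLin.injective ?_⟩
  ext1 x
  rw [toLpLin_mul 2 2 2, LinearMap.comp_apply, LinearEquiv.apply_symm_apply]
  exact hU x

end Matrix

namespace Equiv.Perm

variable {m n R : Type*} [Fintype m] [Fintype n] [DecidableEq n] [CommSemiring R]

theorem transpose_permMatrix_mul_self (σ : Perm n) : (σ.permMatrix R)ᵀ * σ.permMatrix R = 1 := by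
  rw [transpose_permMatrix, ← permMatrix_mul, mul_inv_cancel, permMatrix_one]

theorem transpose_mul_self_mul_transpose_permMatrix (V : Matrix m n R) (σ : Perm n) :
    (V * (σ.permMatrix R)ᵀ)ᵀ * (V * (σ.permMatrix R)ᵀ) =
      σ.permMatrix R * (Vᵀ * V) * (σ.permMatrix R)ᵀ := by
  simp only [Matrix.transpose_mul, Matrix.transpose_transpose, Matrix.mul_assoc]

theorem exists_transpose_mul_self_eq_conj_permMatrix_iff (σ : Perm n) (A : Matrix n n R) :
    (∃ W : Matrix m n R, Wᵀ * W = σ.permMatrix R * A * (σ.permMatrix R)ᵀ) ↔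
      ∃ V : Matrix m n R, Vᵀ * V = A := by
  constructor
  · rintro ⟨W, hW⟩
    refine ⟨W * σ.permMatrix R, ?_⟩
    rw [transpose_mul, Matrix.mul_assoc, ← Matrix.mul_assoc Wᵀ, hW, Matrix.mul_assoc,
      Matrix.mul_assoc, transpose_permMatrix_mul_self, Matrix.mul_one, ← Matrix.mul_assoc,
      transpose_permMatrix_mul_self, Matrix.one_mul]
  · rintro ⟨V, rfl⟩
    exact ⟨_, transpose_mul_self_mul_transpose_permMatrix V σ⟩

end Equiv.Perm

theorem stmt9_general (d n : ℕ) (F : Matrix (Fin d) (Fin n) ℝ → ℝ) :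
    ((∀ U : Matrix.orthogonalGroup (Fin d) ℝ, ∀ V, F ((U : Matrix (Fin d) (Fin d) ℝ) * V) = F V) ∧
      (∀ (π : Equiv.Perm (Fin n)) (V), F (V * (π.permMatrix ℝ)ᵀ) = F V)) ↔
    ∃ G : Matrix (Fin n) (Fin n) ℝ → ℝ,
      (∀ A : Matrix (Fin n) (Fin n) ℝ, A.PosSemidef → A.rank ≤ d →
        ∀ π : Equiv.Perm (Fin n),
          G (π.permMatrix ℝ * A * (π.permMatrix ℝ)ᵀ) = G A) ∧
      (∀ V, F V = G (Vᵀ * V)) := by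
  constructor
  · rintro ⟨hO, hS⟩
    have hF : F.FactorsThrough fun V => Vᵀ * V := fun V W h => by
      obtain ⟨U, hU, rfl⟩ := exists_mem_orthogonalGroup_mul_eq_of_transpose_mul_self_eq h
      exact (hO ⟨U, hU⟩ V).symm
    refine ⟨Function.extend (fun V => Vᵀ * V) F 0, fun A _ _ σ => ?_,
      fun V => (hF.extend_apply 0 V).symm⟩
    by_cases hA : ∃ V : Matrix (Fin d) (Fin n) ℝ, Vᵀ * V = A
    · obtain ⟨V, rfl⟩ := hA
      rw [← σ.transpose_mul_self_mul_transpose_permMatrix, hF.extend_apply, hF.extend_apply, hS]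
    · rw [Function.extend_apply' _ _ _ hA, Function.extend_apply' _ _ _
        (by rwa [σ.exists_transpose_mul_self_eq_conj_permMatrix_iff])]
      rfl
  · rintro ⟨G, hG, hFG⟩
    refine ⟨fun U V => ?_, fun σ V => ?_⟩
    · rw [hFG, hFG, transpose_mul_self_of_mem_orthogonalGroup U.2]
    · rw [hFG, hFG, σ.transpose_mul_self_mul_transpose_permMatrix]
      refine hG _ ?_ ((rank_mul_le_right _ _).trans (rank_le_height V)) σ
      simpa only [conjTranspose_eq_transpose_of_trivial] using posSemidef_conjTranspose_mul_self V

/-- a function on `d × n` matrices is invariant under the left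
`O(d)`-action and the right column-permutation `S_n`-action iff it factors
through the Gram matrix `VᵀV` via a function on PSD matrices of rank `≤ d`
that is invariant under simultaneous row-and-column permutations. -/
theorem stmt9 (d n : ℕ) (hdn : d ≤ n) (F : Matrix (Fin d) (Fin n) ℝ → ℝ) :
    ((∀ U : Matrix.orthogonalGroup (Fin d) ℝ, ∀ V, F ((U : Matrix (Fin d) (Fin d) ℝ) * V) = F V) ∧
      (∀ (π : Equiv.Perm (Fin n)) (V), F (V * (π.permMatrix ℝ)ᵀ) = F V)) ↔
    ∃ G : Matrix (Fin n) (Fin n) ℝ → ℝ,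
      (∀ A : Matrix (Fin n) (Fin n) ℝ, A.PosSemidef → A.rank ≤ d →
        ∀ π : Equiv.Perm (Fin n),
          G (π.permMatrix ℝ * A * (π.permMatrix ℝ)ᵀ) = G A) ∧
      (∀ V, F V = G (Vᵀ * V)) :=
  stmt9_general d n F
end

section
/- Let I₂ ⊆ ℝ[X_{ij} : 1 ≤ i ≤ j ≤ n] be the ideal generated by the 2×2 minors X_{ij}X_{kℓ} − X_{iℓ}X_{kj} (of the symmetric matrix of variables, with X_{ij} = X_{ji}). Let f* = Σ_{i≠j} X_{ii}X_{ij}. For any pair (σ,τ) in the group Γ = S_n × S_{n(n−1)/2} acting by independently permuting the diagonal variables and the off-diagonal variables, if (σ,τ)·f* − f* ∈ I₂, then (σ,τ)·f* = f*. -/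
/-!
Specialise the generic symmetric matrix to the rank-one matrix `X_{ij} ↦ Y_i Y_j`. This kills
`I₂` and sends the monomial `X_{ij} X_{kl}` to the monomial of the index multiset `{i, j, k, l}`,
so the images of `ρ·f⋆` and `f⋆` agree; as all their coefficients are positive, nothing cancels
and every index multiset of `ρ·f⋆` is one of `f⋆`. Those have the form `{k, k, k, l}`, in which
no index occurs exactly twice. The term `X_{σ(i)σ(i)} ρ(X_{ij})` of `ρ·f⋆`, where `σ` is the
permutation `ρ` induces on the diagonal, therefore has `σ(i)` among the indices of `ρ(X_{ij})`;
by symmetry so does `σ(j)`, so `ρ` is the substitution induced by `σ`, under which `f⋆` is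
invariant.
-/

open MvPolynomial

/-- The ideal `I₂` generated by the `2×2` minors
`X_{ij} X_{kℓ} − X_{iℓ} X_{kj}` of the generic symmetric matrix. -/
noncomputable def minorIdeal2 (n : ℕ) : Ideal (MvPolynomial (Sym2 (Fin n)) ℝ) :=
  Ideal.span {q | ∃ i j k l : Fin n,
    q = X (Sym2.mk i j) * X (Sym2.mk k l) -
        X (Sym2.mk i l) * X (Sym2.mk k j)}

namespace MvPolynomial

theorem exists_eq_of_sum_monomial_one_eq {R σ ι κ : Type*} [CommSemiring R] [CharZero R]
    {s : Finset ι} {t : Finset κ} {m : ι → σ →₀ ℕ} {m' : κ → σ →₀ ℕ}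
    (h : ∑ i ∈ s, monomial (m i) (1 : R) = ∑ j ∈ t, monomial (m' j) 1) {i : ι} (hi : i ∈ s) :
    ∃ j ∈ t, m' j = m i := by
  classical
  by_contra! hne
  have hcoeff := congrArg (coeff (m i)) h
  simp only [coeff_sum, coeff_monomial, Finset.sum_boole] at hcoeff
  rw [Finset.filter_false_of_mem hne, Finset.card_empty, Nat.cast_inj,
    Finset.card_eq_zero, Finset.filter_eq_empty_iff] at hcoeff
  exact hcoeff hi rfl

variable (R α : Type*) [CommSemiring R] [DecidableEq α]

noncomputable def rankOneEval : MvPolynomial (Sym2 α) R →ₐ[R] MvPolynomial α R :=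
  aeval fun z => monomial (Multiset.toFinsupp z.toMultiset) 1

variable {R α}

theorem rankOneEval_X (z : Sym2 α) :
    rankOneEval R α (X z) = monomial (Multiset.toFinsupp z.toMultiset) 1 :=
  aeval_X _ _

theorem rankOneEval_X_mk (i j : α) : rankOneEval R α (X s(i, j)) = X i * X j := by
  have hmk : s(i, j).toMultiset = {i} + {j} := rfl
  rw [rankOneEval_X, hmk, map_add, Multiset.toFinsupp_singleton, Multiset.toFinsupp_singleton,
    X, X, monomial_mul, one_mul]

end MvPolynomial

theorem Sym2.mem_of_toMultiset_add_eq {α : Type*} {c k l : α} {z : Sym2 α}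
    (h : s(c, c).toMultiset + z.toMultiset = s(k, k).toMultiset + s(k, l).toMultiset) :
    c ∈ z := by
  classical
  rw [← Sym2.mem_toMultiset, ← Multiset.count_pos]
  have hc := congrArg (Multiset.count c) h
  have hmk : ∀ a b : α, s(a, b).toMultiset = {a, b} := fun _ _ => rfl
  simp only [hmk, Multiset.count_add, Multiset.insert_eq_cons, Multiset.count_cons,
    Multiset.count_singleton] at hc
  split_ifs at hc <;> omega

theorem minorIdeal2_le_ker_rankOneEval (n : ℕ) :
    minorIdeal2 n ≤ RingHom.ker (rankOneEval ℝ (Fin n)) := by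
  rw [minorIdeal2, Ideal.span_le]
  rintro _ ⟨i, j, k, l, rfl⟩
  simp only [SetLike.mem_coe, RingHom.mem_ker, map_sub, map_mul, rankOneEval_X_mk]
  ring

theorem rankOneEval_rename_fstarPoly (n : ℕ) (g : Sym2 (Fin n) → Sym2 (Fin n)) :
    rankOneEval ℝ (Fin n) (rename g (fstarPoly n)) =
      ∑ p ∈ Finset.univ.offDiag,
        monomial
          (Multiset.toFinsupp ((g s(p.1, p.1)).toMultiset + (g s(p.1, p.2)).toMultiset)) 1 := by
  simp only [fstarPoly, map_sum, map_mul, rename_X, rankOneEval_X, monomial_mul, one_mul, map_add]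

theorem mem_of_rename_fstarPoly_sub_mem {n : ℕ} {ρ : Sym2 (Fin n) → Sym2 (Fin n)}
    {σ : Fin n → Fin n} (hσ : ∀ i, ρ s(i, i) = s(σ i, σ i))
    (hmem : rename ρ (fstarPoly n) - fstarPoly n ∈ minorIdeal2 n) {i j : Fin n} (hij : i ≠ j) :
    σ i ∈ ρ s(i, j) := by
  have hker := minorIdeal2_le_ker_rankOneEval n hmem
  rw [RingHom.mem_ker, map_sub, sub_eq_zero, rankOneEval_rename_fstarPoly,
    ← rename_id_apply (fstarPoly n), rankOneEval_rename_fstarPoly] at hker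
  obtain ⟨q, -, hq⟩ := exists_eq_of_sum_monomial_one_eq hker (i := (i, j)) (by simpa using hij)
  rw [hσ] at hq
  exact Sym2.mem_of_toMultiset_add_eq (Multiset.toFinsupp.injective hq).symm

theorem rename_sym2Map_fstarPoly (n : ℕ) (e : Equiv.Perm (Fin n)) :
    rename (Sym2.map e) (fstarPoly n) = fstarPoly n := by
  rw [fstarPoly, map_sum]
  refine Finset.sum_equiv (e.prodCongr e) (fun p => ?_) (fun p _ => ?_)
  · simp [e.injective.eq_iff]
  · simp

theorem stmt12_general (n : ℕ) (ρ : Equiv.Perm (Sym2 (Fin n)))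
    (hdiag : ∀ x : Sym2 (Fin n), x.IsDiag → (ρ x).IsDiag)
    (hmem : MvPolynomial.rename (⇑ρ) (fstarPoly n) - fstarPoly n ∈ minorIdeal2 n) :
    MvPolynomial.rename (⇑ρ) (fstarPoly n) = fstarPoly n := by
  let σ i := (ρ (Sym2.diag i)).diagElem (hdiag _ (Sym2.diag_isDiag i))
  have hσ : ∀ i, ρ s(i, i) = s(σ i, σ i) := fun i => (Sym2.diag_diagElem _).symm
  have hinj : Function.Injective σ := fun i j h =>
    Sym2.diag_injective (ρ.injective (by simp only [Sym2.diag, hσ, h]))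
  let e := Equiv.ofBijective σ hinj.bijective_of_finite
  have hρ : ⇑ρ = Sym2.map e := funext <| Sym2.ind fun i j => by
    rcases eq_or_ne i j with rfl | hij
    · exact hσ i
    · refine (Sym2.mem_and_mem_iff (hinj.ne hij)).1
        ⟨mem_of_rename_fstarPoly_sub_mem hσ hmem hij, ?_⟩
      rw [Sym2.eq_swap]
      exact mem_of_rename_fstarPoly_sub_mem hσ hmem hij.symm
  rw [hρ, rename_sym2Map_fstarPoly]

/-- for any variable permutation `ρ` coming from the group
`Γ = S_n × S_{n(n−1)/2}` (i.e. preserving the diagonal/off-diagonal split),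
if `ρ·f⋆ − f⋆ ∈ I₂` then `ρ·f⋆ = f⋆`. -/
theorem stmt12 (n : ℕ) (ρ : Equiv.Perm (Sym2 (Fin n)))
    (hdiag : ∀ x : Sym2 (Fin n), x.IsDiag → (ρ x).IsDiag)
    (hoff : ∀ x : Sym2 (Fin n), ¬ x.IsDiag → ¬ (ρ x).IsDiag)
    (hmem : MvPolynomial.rename (⇑ρ) (fstarPoly n) - fstarPoly n ∈ minorIdeal2 n) :
    MvPolynomial.rename (⇑ρ) (fstarPoly n) = fstarPoly n :=
  stmt12_general n ρ hdiag hmem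
end
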